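/- arXiv:1806.02783 — 2 statements merged into one kernel-verified Lean document; each statement's English description precedes it below -/
import Mathlib

section
/- Let G be a 2r-regular graph on n vertices with constant threshold τ(v) = r+1 for every v, and let D be any weak dynamic monopoly with processing time t. Then n / (1 + r(1 − ((r−1)/(r+1))^t)) ≤ |D|. -/
open SimpleGraph Finset
open scoped Classical

/-- Layers witnessing a weak dynamic monopoly: every vertex in layer `i ≥ 1`
has at least `τ v` neighbors in layer `i - 1`. -/
def IsWDMLayers {V : Type*} (G : SimpleGraph V) [Fintype V] (τ : V → ℕ) (L : V → ℕ) : Prop :=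
  ∀ v : V, 1 ≤ L v →
    τ v ≤ ((G.neighborFinset v).filter (fun u => L u + 1 = L v)).card

/-- `D` is a weak dynamic monopoly of `(G, τ)`. -/
def IsWDM {V : Type*} (G : SimpleGraph V) [Fintype V] (τ : V → ℕ) (D : Finset V) : Prop :=
  ∃ L : V → ℕ, IsWDMLayers G τ L ∧ ∀ v, v ∈ D ↔ L v = 0

/-- The smallest size of a weak dynamic monopoly. -/
noncomputable def wdyn {V : Type*} (G : SimpleGraph V) [Fintype V] (τ : V → ℕ) : ℕ :=
  sInf {n | ∃ D : Finset V, IsWDM G τ D ∧ D.card = n}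

/-!
Let `cᵢ` be the number of vertices in layer `i`. Double counting the edges between consecutive
layers gives `(r + 1) c₁ ≤ 2r c₀`, and, since a vertex of layer `i + 1` already spends `r + 1`
of its `2r` edges on layer `i`, also `(r + 1) c_{i+2} ≤ (r - 1) c_{i+1}`. Hence the layer sizes
decay geometrically with ratio `q = (r - 1)/(r + 1)`, and summing gives
`n = ∑ cᵢ ≤ c₀ (1 + 2r/(r + 1) ∑_{i<t} qⁱ) = c₀ (1 + r (1 - qᵗ))`.
-/

section Layers

variable {V : Type*} [Fintype V] {G : SimpleGraph V} {τ L : V → ℕ} {v : V} {i j d m r : ℕ}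

def layer (L : V → ℕ) (i : ℕ) : Finset V := {v | L v = i}

@[simp]
lemma mem_layer : v ∈ layer L i ↔ L v = i := by simp [layer]

lemma card_eq_sum_card_layer {t : ℕ} (ht : ∀ v, L v ≤ t) :
    Fintype.card V = ∑ i ∈ range (t + 1), #(layer L i) := by
  rw [← card_univ]
  exact card_eq_sum_card_fiberwise fun v _ ↦ mem_range.2 (Nat.lt_succ_of_le (ht v))

lemma card_adj_layer_le_degree (G : SimpleGraph V) (L : V → ℕ) (i : ℕ) (v : V) :
    #{u ∈ layer L i | G.Adj v u} ≤ G.degree v := by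
  rw [← card_neighborFinset_eq_degree]
  exact card_le_card fun u hu ↦ (mem_neighborFinset _ _ _).2 (mem_filter.1 hu).2

lemma card_adj_layer_add_card_adj_layer_le_degree (G : SimpleGraph V) (L : V → ℕ) (hij : i ≠ j)
    (v : V) : #{u ∈ layer L i | G.Adj v u} + #{u ∈ layer L j | G.Adj v u} ≤ G.degree v := by
  have hdisj : Disjoint {u ∈ layer L i | G.Adj v u} {u ∈ layer L j | G.Adj v u} :=
    disjoint_filter_filter <| disjoint_left.2 fun u hi hj ↦
      hij ((mem_layer.1 hi).symm.trans (mem_layer.1 hj))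
  rw [← card_union_of_disjoint hdisj, ← card_neighborFinset_eq_degree]
  refine card_le_card fun u hu ↦ (mem_neighborFinset _ _ _).2 ?_
  rcases mem_union.1 hu with hu | hu <;> exact (mem_filter.1 hu).2

namespace IsWDMLayers

lemma le_card_adj_layer (hL : IsWDMLayers G τ L) (hv : L v = i + 1) :
    τ v ≤ #{u ∈ layer L i | G.Adj v u} := by
  convert hL v (by omega) using 2
  ext u
  simp only [mem_filter, mem_layer, mem_neighborFinset, hv, Nat.add_right_cancel_iff, and_comm]

lemma add_card_adj_layer_add_two_le_degree (hL : IsWDMLayers G τ L) (hv : L v = i + 1) :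
    τ v + #{u ∈ layer L (i + 2) | G.Adj v u} ≤ G.degree v :=
  (Nat.add_le_add_right (hL.le_card_adj_layer hv) _).trans
    (card_adj_layer_add_card_adj_layer_le_degree G L (by omega) v)

lemma mul_card_layer_succ_le (hL : IsWDMLayers G τ L) (hm : ∀ v, m ≤ τ v)
    (hd : ∀ u ∈ layer L i, #{v ∈ layer L (i + 1) | G.Adj u v} ≤ d) :
    m * #(layer L (i + 1)) ≤ d * #(layer L i) := by
  rw [mul_comm, mul_comm d]
  refine card_mul_le_card_mul G.Adj (fun v hv ↦ ?_) fun u hu ↦ ?_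
  · exact (hm v).trans (hL.le_card_adj_layer (mem_layer.1 hv))
  · simpa only [bipartiteBelow, G.adj_comm] using hd u hu

lemma card_layer_one_le (hL : IsWDMLayers G (fun _ ↦ r + 1) L)
    (hdeg : ∀ v, G.degree v ≤ 2 * r) : (r + 1) * #(layer L 1) ≤ 2 * r * #(layer L 0) :=
  hL.mul_card_layer_succ_le (fun _ ↦ le_rfl) fun u _ ↦
    (card_adj_layer_le_degree G L 1 u).trans (hdeg u)

lemma card_layer_add_two_le (hL : IsWDMLayers G (fun _ ↦ r + 1) L)
    (hdeg : ∀ v, G.degree v ≤ 2 * r) (i : ℕ) :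
    (r + 1) * #(layer L (i + 2)) ≤ (r - 1) * #(layer L (i + 1)) :=
  hL.mul_card_layer_succ_le (fun _ ↦ le_rfl) fun u hu ↦ by
    show #{v ∈ layer L (i + 2) | G.Adj u v} ≤ r - 1
    have := hL.add_card_adj_layer_add_two_le_degree (mem_layer.1 hu)
    have := hdeg u
    omega

end IsWDMLayers

end Layers

lemma sum_range_succ_le_of_geometric_decay {r : ℝ} (hr : 1 ≤ r) {c : ℕ → ℝ}
    (h₁ : (r + 1) * c 1 ≤ 2 * r * c 0)
    (h₂ : ∀ i, (r + 1) * c (i + 2) ≤ (r - 1) * c (i + 1)) (t : ℕ) :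
    ∑ i ∈ range (t + 1), c i ≤ c 0 * (1 + r * (1 - ((r - 1) / (r + 1)) ^ t)) := by
  set q := (r - 1) / (r + 1) with hq
  have hr₁ : 0 < r + 1 := by linarith
  have hq₀ : 0 ≤ q := div_nonneg (by linarith) hr₁.le
  have hc₁ : c 1 ≤ 2 * r / (r + 1) * c 0 := by
    rw [div_mul_eq_mul_div, le_div_iff₀ hr₁]; linarith
  have hdecay (i : ℕ) : c (i + 1) ≤ q ^ i * (2 * r / (r + 1) * c 0) := by
    refine (le_geom (u := fun i ↦ c (i + 1)) hq₀ i fun k _ ↦ ?_).trans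
      (mul_le_mul_of_nonneg_left hc₁ (pow_nonneg hq₀ i))
    rw [hq, div_mul_eq_mul_div, le_div_iff₀ hr₁]; linarith [h₂ k]
  have hgeom : ∑ i ∈ range t, q ^ i * (2 * r / (r + 1) * c 0) = c 0 * (r * (1 - q ^ t)) := by
    have hq₁ : q ≠ 1 := by rw [hq, ne_eq, div_eq_one_iff_eq hr₁.ne']; linarith
    rw [← sum_mul, geom_sum_eq hq₁, hq]
    field_simp
    ring
  rw [sum_range_succ', mul_add, mul_one, add_comm (c 0)]
  linarith [sum_le_sum fun i (_ : i ∈ range t) ↦ hdecay i]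

lemma one_add_mul_one_sub_pow_pos {r : ℝ} (hr : 1 ≤ r) (t : ℕ) :
    0 < 1 + r * (1 - ((r - 1) / (r + 1)) ^ t) := by
  have hq : ((r - 1) / (r + 1)) ^ t ≤ 1 :=
    pow_le_one₀ (div_nonneg (by linarith) (by linarith))
      (div_le_one_of_le₀ (by linarith) (by linarith))
  nlinarith

/-- Lower bound for the size of a weak dynamic monopoly with processing time `t`
in a `2r`-regular graph with constant threshold `r+1`. -/
theorem wdm_size_lower_bound_even_regular {V : Type*} (G : SimpleGraph V) [Fintype V]
    (r t : ℕ) (hr : 1 ≤ r)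
    (hreg : ∀ v, G.degree v = 2 * r)
    (L : V → ℕ) (hL : IsWDMLayers G (fun _ => r + 1) L) (ht : ∀ v, L v ≤ t) :
    (Fintype.card V : ℝ) / (1 + r * (1 - (((r : ℝ) - 1) / ((r : ℝ) + 1)) ^ t)) ≤
      (Finset.univ.filter (fun v => L v = 0)).card := by
  have hr' : (1 : ℝ) ≤ r := by exact_mod_cast hr
  have hdeg v : G.degree v ≤ 2 * r := (hreg v).le
  rw [div_le_iff₀ (one_add_mul_one_sub_pow_pos hr' t), card_eq_sum_card_layer ht, Nat.cast_sum]
  refine sum_range_succ_le_of_geometric_decay hr' (by exact_mod_cast hL.card_layer_one_le hdeg)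
    (fun i ↦ ?_) t
  rw [← Nat.cast_pred hr]
  exact_mod_cast hL.card_layer_add_two_le hdeg i
end

section
/- Let G be a graph with thresholds τ(v) ≥ k ≥ 2 for all v, and let D be a weak dynamic monopoly with processing time t ≥ 1. Then G contains a subdivision of K_{1,k} (a starlike tree) whose central vertex has degree k and whose k branches each have length t−1 from the center's neighbors, i.e. a spider with k legs of length t. -/
open SimpleGraph Finset
open scoped Classical

/-! Start from `k` distinct lower neighbours of a vertex in the last layer and descend layer by
layer: `k` distinct vertices of a layer `≥ 1` each have at least `k` lower neighbours, so by Hall's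
theorem they continue to `k` distinct vertices of the layer below. The resulting paths are disjoint
because each visits every layer once, at distinct vertices. -/

noncomputable def lowerNeighborFinset {V : Type*} (G : SimpleGraph V) [Fintype V] (L : V → ℕ)
    (v : V) : Finset V :=
  (G.neighborFinset v).filter (fun u => L u + 1 = L v)

@[simp]
lemma mem_lowerNeighborFinset {V : Type*} {G : SimpleGraph V} [Fintype V] {L : V → ℕ} {u v : V} :
    u ∈ lowerNeighborFinset G L v ↔ G.Adj v u ∧ L u + 1 = L v := by
  simp [lowerNeighborFinset]

lemma exists_injective_mem_of_card_le {ι α : Type*} [Fintype ι] [DecidableEq α]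
    (T : ι → Finset α) (hT : ∀ i, Fintype.card ι ≤ #(T i)) :
    ∃ f : ι → α, Function.Injective f ∧ ∀ i, f i ∈ T i := by
  rw [← Finset.all_card_le_biUnion_card_iff_exists_injective]
  intro s
  rcases s.eq_empty_or_nonempty with rfl | ⟨i, hi⟩
  · simp
  · calc #s ≤ Fintype.card ι := card_le_univ s
      _ ≤ #(T i) := hT i
      _ ≤ #(s.biUnion T) := card_le_card (subset_biUnion_of_mem T hi)

lemma exists_disjoint_descending_paths {V : Type*} (G : SimpleGraph V) [Fintype V]
    (L : V → ℕ) (k : ℕ) (hL : ∀ v, 1 ≤ L v → k ≤ #(lowerNeighborFinset G L v)) (m : ℕ)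
    (e : Fin k → V) (he : Function.Injective e) (hLe : ∀ j, L (e j) = m) :
    ∃ f : Fin k → ℕ → V, (∀ j, f j m = e j) ∧ (∀ j, ∀ s ≤ m, L (f j s) = s) ∧
      (∀ j, ∀ s < m, G.Adj (f j s) (f j (s + 1))) ∧
      (∀ j j', ∀ s ≤ m, f j s = f j' s → j = j') := by
  induction m generalizing e with
  | zero =>
    refine ⟨fun j _ => e j, fun _ => rfl, ?_, fun _ _ hs => absurd hs (Nat.not_lt_zero _),
      fun _ _ _ _ h => he h⟩
    intro j s hs
    simpa [Nat.le_zero.mp hs] using hLe j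
  | succ m ih =>
    obtain ⟨e', he', he'mem⟩ := exists_injective_mem_of_card_le
      (fun j => lowerNeighborFinset G L (e j))
      (fun j => by simpa using hL (e j) (by rw [hLe j]; omega))
    simp only [mem_lowerNeighborFinset, hLe, Nat.add_right_cancel_iff] at he'mem
    obtain ⟨f, hf, hfL, hfadj, hfinj⟩ := ih e' he' (fun j => (he'mem j).2)
    refine ⟨fun j s => if s = m + 1 then e j else f j s, by simp, ?_, ?_, ?_⟩
    · intro j s hs
      by_cases h : s = m + 1
      · simp [h, hLe j]
      · simpa [h] using hfL j s (by omega)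
    · intro j s hs
      by_cases h : s = m
      · subst h
        simpa [hf j] using (he'mem j).1.symm
      · simpa [h, show s ≠ m + 1 by omega] using hfadj j s (by omega)
    · intro j j' s hs h
      by_cases hs' : s = m + 1
      · simp only [hs', if_true] at h
        exact he h
      · simp only [hs', if_false] at h
        exact hfinj j j' s (by omega) h

theorem wdm_starlike_tree_general {V : Type*} (G : SimpleGraph V) [Fintype V]
    (τ : V → ℕ) (k t : ℕ) (ht1 : 1 ≤ t) (hτ : ∀ v, k ≤ τ v)
    (L : V → ℕ) (hL : IsWDMLayers G τ L)
    (hproc : ∃ w, L w = t) :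
    ∃ (c : V) (f : Fin k → ℕ → V), L c = t ∧
      (∀ j, ∀ s ≤ t - 1, L (f j s) = s) ∧
      (∀ j, ∀ s < t - 1, G.Adj (f j s) (f j (s + 1))) ∧
      (∀ j, G.Adj (f j (t - 1)) c) ∧
      (∀ j j' : Fin k, ∀ s ≤ t - 1, ∀ s' ≤ t - 1, f j s = f j' s' → j = j') := by
  obtain ⟨c, hc⟩ := hproc
  have hlower : ∀ v, 1 ≤ L v → k ≤ #(lowerNeighborFinset G L v) :=
    fun v hv => (hτ v).trans (hL v hv)
  obtain ⟨e, he, hemem⟩ := exists_injective_mem_of_card_le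
    (fun _ : Fin k => lowerNeighborFinset G L c) (fun _ => by simpa using hlower c (by omega))
  simp only [mem_lowerNeighborFinset, hc] at hemem
  obtain ⟨f, hf, hfL, hfadj, hfinj⟩ := exists_disjoint_descending_paths G L k hlower (t - 1) e he
    (fun j => by have := (hemem j).2; omega)
  refine ⟨c, f, hc, hfL, hfadj, fun j => hf j ▸ (hemem j).1.symm, ?_⟩
  intro j j' s hs s' hs' h
  obtain rfl : s = s' := by rw [← hfL j s hs, ← hfL j' s' hs', h]
  exact hfinj j j' s hs h

/-- If all thresholds are at least `k ≥ 2` and there is a weak dynamic monopoly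
with processing time `t ≥ 1`, then `G` contains a starlike tree (spider): a
central vertex `c` in the last layer together with `k` pairwise disjoint paths
of length `t-1`, the paths joined to `c` at neighbors of `c` in layer `t-1`. -/
theorem wdm_starlike_tree {V : Type*} (G : SimpleGraph V) [Fintype V]
    (τ : V → ℕ) (k t : ℕ) (hk : 2 ≤ k) (ht1 : 1 ≤ t) (hτ : ∀ v, k ≤ τ v)
    (L : V → ℕ) (hL : IsWDMLayers G τ L) (ht : ∀ v, L v ≤ t)
    (hproc : ∃ w, L w = t) :
    ∃ (c : V) (f : Fin k → ℕ → V), L c = t ∧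
      (∀ j, ∀ s ≤ t - 1, L (f j s) = s) ∧
      (∀ j, ∀ s < t - 1, G.Adj (f j s) (f j (s + 1))) ∧
      (∀ j, G.Adj (f j (t - 1)) c) ∧
      (∀ j j' : Fin k, ∀ s ≤ t - 1, ∀ s' ≤ t - 1, f j s = f j' s' → j = j') :=
  wdm_starlike_tree_general G τ k t ht1 hτ L hL hproc
end
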